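/- Let X be a real normed space and let x, y, z ∈ X with x ≠ y and y ≠ z. Set λ = ‖y−z‖/(‖x−y‖+‖y−z‖). Then δ_X( ((‖x−y‖+‖y−z‖)/(‖x−y‖·‖y−z‖)) · ‖ y − (λ·x + (1−λ)·z) ‖ ) ≤ ( ‖x−y‖ + ‖y−z‖ − ‖x−z‖ ) / min{‖x−y‖, ‖y−z‖}, where δ_X is the modulus of convexity of X. -/
import Mathlib


/-- The modulus of convexity of a normed space `X`:
`δ_X(ε) = inf { 1 − ‖u+v‖/2 : ‖u‖ ≤ 1, ‖v‖ ≤ 1, ‖u−v‖ ≥ ε }`. -/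
noncomputable def modulusOfConvexity (X : Type*) [NormedAddCommGroup X]
    [NormedSpace ℝ X] (ε : ℝ) : ℝ :=
  sInf {t : ℝ | ∃ u v : X, ‖u‖ ≤ 1 ∧ ‖v‖ ≤ 1 ∧ ε ≤ ‖u - v‖ ∧ t = 1 - ‖u + v‖ / 2}

private lemma aux14 {a b c N : ℝ} (ha : 0 < a) (hb : 0 < b)
    (hc : c ≤ a + b) (hN : a⁻¹ * c - (a⁻¹ - b⁻¹) * b ≤ N) :
    1 - N / 2 ≤ (a + b - c) / a := by
  rw [le_div_iff₀ ha]
  have key : c - b + a ≤ a * N := by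
    have h := mul_le_mul_of_nonneg_left hN ha.le
    have heq : a * (a⁻¹ * c - (a⁻¹ - b⁻¹) * b) = c - b + a := by
      field_simp
      ring
    linarith [heq ▸ h]
  nlinarith

/-- For `x, y, z` in a real normed space `X` with `x ≠ y`, `y ≠ z`, and
`λ = ‖y−z‖/(‖x−y‖+‖y−z‖)`:
`δ_X( ((‖x−y‖+‖y−z‖)/(‖x−y‖·‖y−z‖))·‖y − (λx + (1−λ)z)‖ )
  ≤ (‖x−y‖+‖y−z‖−‖x−z‖)/min{‖x−y‖,‖y−z‖}`. -/
theorem stmt14 {X : Type*} [NormedAddCommGroup X] [NormedSpace ℝ X]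
    (x y z : X) (hxy : x ≠ y) (hyz : y ≠ z) :
    modulusOfConvexity X
        ((‖x - y‖ + ‖y - z‖) / (‖x - y‖ * ‖y - z‖) *
          ‖y - ((‖y - z‖ / (‖x - y‖ + ‖y - z‖)) • x +
            (1 - ‖y - z‖ / (‖x - y‖ + ‖y - z‖)) • z)‖) ≤
      (‖x - y‖ + ‖y - z‖ - ‖x - z‖) / min ‖x - y‖ ‖y - z‖ := by
  have ha : (0:ℝ) < ‖x - y‖ := norm_pos_iff.mpr (sub_ne_zero.mpr hxy)
  have hb : (0:ℝ) < ‖y - z‖ := norm_pos_iff.mpr (sub_ne_zero.mpr hyz)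
  set a := ‖x - y‖ with hadef
  set b := ‖y - z‖ with hbdef
  set c := ‖x - z‖ with hcdef
  have ha' : a ≠ 0 := ha.ne'
  have hb' : b ≠ 0 := hb.ne'
  have hab : (0:ℝ) < a + b := by linarith
  have hab' : a + b ≠ 0 := hab.ne'
  set u : X := a⁻¹ • (y - x) with hudef
  set v : X := b⁻¹ • (z - y) with hvdef
  have hnu : ‖u‖ = 1 := by
    rw [hudef, norm_smul, Real.norm_eq_abs, abs_of_pos (inv_pos.mpr ha),
      norm_sub_rev, ← hadef, inv_mul_cancel₀ ha']
  have hnv : ‖v‖ = 1 := by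
    rw [hvdef, norm_smul, Real.norm_eq_abs, abs_of_pos (inv_pos.mpr hb),
      norm_sub_rev, ← hbdef, inv_mul_cancel₀ hb']
  have hvec : ((a + b) / (a * b)) • (y - ((b / (a + b)) • x +
      (1 - b / (a + b)) • z)) = u - v := by
    rw [hudef, hvdef]
    match_scalars <;> field_simp <;> ring
  have hq : (0:ℝ) < (a + b) / (a * b) := div_pos hab (mul_pos ha hb)
  have hε : (a + b) / (a * b) * ‖y - ((b / (a + b)) • x +
      (1 - b / (a + b)) • z)‖ = ‖u - v‖ := by
    rw [← hvec, norm_smul, Real.norm_eq_abs, abs_of_pos hq]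
  have hbdd : BddBelow {t : ℝ | ∃ u v : X, ‖u‖ ≤ 1 ∧ ‖v‖ ≤ 1 ∧
      (a + b) / (a * b) * ‖y - ((b / (a + b)) • x +
        (1 - b / (a + b)) • z)‖ ≤ ‖u - v‖ ∧ t = 1 - ‖u + v‖ / 2} := by
    refine ⟨0, ?_⟩
    rintro t ⟨p, q, hp, hq', -, rfl⟩
    have := norm_add_le p q
    linarith
  have hmem : (1 - ‖u + v‖ / 2) ∈ {t : ℝ | ∃ u v : X, ‖u‖ ≤ 1 ∧ ‖v‖ ≤ 1 ∧
      (a + b) / (a * b) * ‖y - ((b / (a + b)) • x +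
        (1 - b / (a + b)) • z)‖ ≤ ‖u - v‖ ∧ t = 1 - ‖u + v‖ / 2} :=
    ⟨u, v, hnu.le, hnv.le, hε.le, rfl⟩
  have h1 : modulusOfConvexity X ((a + b) / (a * b) * ‖y - ((b / (a + b)) • x +
      (1 - b / (a + b)) • z)‖) ≤ 1 - ‖u + v‖ / 2 := csInf_le hbdd hmem
  refine h1.trans ?_
  have hc_le : c ≤ a + b := by
    have h := norm_add_le (x - y) (y - z)
    simpa [hadef, hbdef, hcdef, sub_add_sub_cancel] using h
  rcases le_total a b with h | h
  · rw [min_eq_left h]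
    have hinv : b⁻¹ ≤ a⁻¹ := by
      have := one_div_le_one_div_of_le ha h
      simpa [one_div] using this
    have hdec : u + v = a⁻¹ • (z - x) + (a⁻¹ - b⁻¹) • (y - z) := by
      rw [hudef, hvdef]; module
    have hN : a⁻¹ * c - (a⁻¹ - b⁻¹) * b ≤ ‖u + v‖ := by
      have h2 : ‖a⁻¹ • (z - x)‖ ≤ ‖a⁻¹ • (z - x) + (a⁻¹ - b⁻¹) • (y - z)‖ +
          ‖(a⁻¹ - b⁻¹) • (y - z)‖ := norm_le_add_norm_add _ _
      rw [← hdec] at h2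
      have e1 : ‖a⁻¹ • (z - x)‖ = a⁻¹ * c := by
        rw [norm_smul, Real.norm_eq_abs, abs_of_pos (inv_pos.mpr ha),
          norm_sub_rev, ← hcdef]
      have e2 : ‖(a⁻¹ - b⁻¹) • (y - z)‖ = (a⁻¹ - b⁻¹) * b := by
        rw [norm_smul, Real.norm_eq_abs, abs_of_nonneg (sub_nonneg.mpr hinv), ← hbdef]
      linarith [e1 ▸ e2 ▸ h2]
    exact aux14 ha hb hc_le hN
  · rw [min_eq_right h]
    have hinv : a⁻¹ ≤ b⁻¹ := by
      have := one_div_le_one_div_of_le hb h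
      simpa [one_div] using this
    have hdec : u + v = b⁻¹ • (z - x) + (b⁻¹ - a⁻¹) • (x - y) := by
      rw [hudef, hvdef]; module
    have hN : b⁻¹ * c - (b⁻¹ - a⁻¹) * a ≤ ‖u + v‖ := by
      have h2 : ‖b⁻¹ • (z - x)‖ ≤ ‖b⁻¹ • (z - x) + (b⁻¹ - a⁻¹) • (x - y)‖ +
          ‖(b⁻¹ - a⁻¹) • (x - y)‖ := norm_le_add_norm_add _ _
      rw [← hdec] at h2
      have e1 : ‖b⁻¹ • (z - x)‖ = b⁻¹ * c := by
        rw [norm_smul, Real.norm_eq_abs, abs_of_pos (inv_pos.mpr hb),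
          norm_sub_rev, ← hcdef]
      have e2 : ‖(b⁻¹ - a⁻¹) • (x - y)‖ = (b⁻¹ - a⁻¹) * a := by
        rw [norm_smul, Real.norm_eq_abs, abs_of_nonneg (sub_nonneg.mpr hinv), ← hadef]
      linarith [e1 ▸ e2 ▸ h2]
    have := aux14 hb ha (by linarith) hN
    linarith [this, show (b + a - c) / b = (a + b - c) / b by ring_nf]
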